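/- arXiv:1801.02339 — 5 statements merged into one kernel-verified Lean document; each statement's English description precedes it below -/
import Mathlib

section
/- Let V be a finite-dimensional commutative real algebra with a positive definite associative symmetric bilinear form. If x is a constrained stationary point of the functional x ↦ ⟨x, x²⟩ on the unit sphere ⟨x,x⟩ = 1, then x² = ⟨x², x⟩ · x; in particular either x² = 0 or c := x / ⟨x², x⟩ is a nonzero idempotent (c² = c). -/
/-- if `x` is a constrained stationary point of `x ↦ ⟨x,x²⟩` on the unit
sphere (derivative vanishes along all directions tangent to the sphere, i.e.
`⟨x²,y⟩ = 0` for all `y ⊥ x`), then `x² = ⟨x²,x⟩·x`; in particular either `x² = 0` or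
`c = x/⟨x²,x⟩` is a nonzero idempotent. -/
theorem stmt_5 {V : Type*} [AddCommGroup V] [Module ℝ V] [FiniteDimensional ℝ V]
    (mul : V →ₗ[ℝ] V →ₗ[ℝ] V) (hcomm : ∀ x y, mul x y = mul y x)
    (B : V →ₗ[ℝ] V →ₗ[ℝ] ℝ) (hsymm : ∀ x y, B x y = B y x)
    (hassoc : ∀ x y z, B (mul x y) z = B x (mul y z))
    (hpos : ∀ x, x ≠ 0 → 0 < B x x)
    (x : V) (hx : B x x = 1)
    (hstat : ∀ y, B x y = 0 → B (mul x x) y = 0) :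
    mul x x = B (mul x x) x • x ∧
      (mul x x = 0 ∨
        ((B (mul x x) x)⁻¹ • x ≠ 0 ∧
          mul ((B (mul x x) x)⁻¹ • x) ((B (mul x x) x)⁻¹ • x) =
            (B (mul x x) x)⁻¹ • x)) := by
  set l := B (mul x x) x with hl
  have hxy : B x (mul x x - l • x) = 0 := by
    simp [map_sub, map_smul, hx, hl, hsymm x (mul x x)]
  have h2 := hstat _ hxy
  have hyy : B (mul x x - l • x) (mul x x - l • x) = 0 := by
    rw [map_sub, map_smul,
      hsymm (mul x x - l • x) (mul x x), hsymm (mul x x - l • x) x, h2, hxy,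
      smul_zero, sub_zero]
  have hy0 : mul x x - l • x = 0 := by
    by_contra h
    exact absurd hyy (ne_of_gt (hpos _ h))
  have heq : mul x x = l • x := sub_eq_zero.mp hy0
  refine ⟨heq, ?_⟩
  rcases eq_or_ne l 0 with h0 | h0
  · left; rw [heq, h0, zero_smul]
  · right
    have hxne : x ≠ 0 := by
      intro h; rw [h] at hx; simp at hx
    refine ⟨smul_ne_zero (inv_ne_zero h0) hxne, ?_⟩
    simp only [map_smul, LinearMap.smul_apply, heq, smul_smul]
    rw [inv_mul_cancel₀ h0, mul_one]
end

section
/- Let V be a nonzero finite-dimensional commutative real algebra with positive definite associative symmetric bilinear form, whose multiplication is not identically zero. If x is a point of (local) maximum of ⟨x, x²⟩ on the unit sphere, then ⟨x², x⟩ > 0. -/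
/-- if the multiplication is nonzero and `x` is a maximum point of
`⟨x,x²⟩` on the unit sphere, then `⟨x²,x⟩ > 0`. -/
theorem stmt_6 {V : Type*} [AddCommGroup V] [Module ℝ V] [FiniteDimensional ℝ V]
    [Nontrivial V]
    (mul : V →ₗ[ℝ] V →ₗ[ℝ] V) (hcomm : ∀ x y, mul x y = mul y x)
    (B : V →ₗ[ℝ] V →ₗ[ℝ] ℝ) (hsymm : ∀ x y, B x y = B y x)
    (hassoc : ∀ x y z, B (mul x y) z = B x (mul y z))
    (hpos : ∀ x, x ≠ 0 → 0 < B x x)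
    (hmul : ¬ ∀ x y, mul x y = 0)
    (x : V) (hx : B x x = 1)
    (hmax : ∀ y, B y y = 1 → B y (mul y y) ≤ B x (mul x x)) :
    0 < B (mul x x) x := by
  have hT : ∀ a b c : V, B a (mul b c) = B b (mul a c) := by
    intro a b c
    rw [← hassoc, ← hassoc, hcomm]
  -- there exists z with B z (mul z z) ≠ 0
  have hz : ∃ z : V, B z (mul z z) ≠ 0 := by
    by_contra h
    push_neg at h
    apply hmul
    have h1 : ∀ a b : V, B a (mul a b) = 0 := by
      intro a b
      have e1 := h (a + b)
      have e2 := h (a - b)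
      have ha := h a
      have hb := h b
      simp only [map_add, map_sub, LinearMap.add_apply, LinearMap.sub_apply] at e1 e2
      have s1 : B a (mul a b) = B a (mul b a) := by rw [hcomm]
      have s2 : B b (mul a a) = B a (mul a b) := by rw [hT, hcomm]
      have s3 : B b (mul a b) = B a (mul b b) := by rw [hT]
      have s4 : B b (mul b a) = B a (mul b b) := by rw [hcomm, hT]
      linarith
    have h2 : ∀ a b c : V, B a (mul b c) = 0 := by
      intro a b c
      have e1 := h1 (a + b) c
      have ha := h1 a c
      have hb := h1 b c
      simp only [map_add, LinearMap.add_apply] at e1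
      have s : B b (mul a c) = B a (mul b c) := (hT b a c)
      linarith
    intro a b
    by_contra hne
    have := hpos (mul a b) hne
    rw [show B (mul a b) (mul a b) = B (mul a b) (mul a b) from rfl] at this
    have := h2 (mul a b) a b
    linarith [hpos (mul a b) hne, h2 (mul a b) a b]
  obtain ⟨z, hz⟩ := hz
  -- WLOG B z (mul z z) > 0
  have hz' : ∃ w : V, 0 < B w (mul w w) := by
    rcases lt_or_gt_of_ne hz with hneg | hposz
    · refine ⟨-z, ?_⟩
      simp only [map_neg, LinearMap.neg_apply, neg_neg]
      linarith
    · exact ⟨z, hposz⟩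
  obtain ⟨w, hw⟩ := hz'
  have hw0 : w ≠ 0 := by
    rintro rfl
    simp at hw
  have hbw : 0 < B w w := hpos w hw0
  set s : ℝ := Real.sqrt (B w w) with hs
  have hs0 : 0 < s := Real.sqrt_pos.mpr hbw
  have hs2 : s * s = B w w := Real.mul_self_sqrt hbw.le
  set y : V := s⁻¹ • w with hy
  have hyy : B y y = 1 := by
    simp only [hy, map_smul, LinearMap.smul_apply, smul_eq_mul]
    field_simp
    nlinarith
  have hfy : 0 < B y (mul y y) := by
    have : B y (mul y y) = s⁻¹ * (s⁻¹ * (s⁻¹ * B w (mul w w))) := by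
      simp [hy, map_smul, smul_eq_mul]
    rw [this]
    positivity
  have := hmax y hyy
  rw [hsymm]
  linarith
end

section
/- Let V be a nonzero finite-dimensional commutative real algebra with positive definite associative symmetric bilinear form and nonzero multiplication. Let x be a global maximum point of ⟨x,x²⟩ on the unit sphere and set c = x/⟨x²,x⟩ (a nonzero idempotent). Then for all y with ⟨y,c⟩ = 0, one has ⟨cy, y⟩ ≤ (1/2)⟨y,y⟩; i.e., L_c ≤ 1/2 on the orthogonal complement of c. -/
/-!
Write `f v = ⟨v, v²⟩` and `λ = f x`. The trilinear form `⟨uv, w⟩` is totally symmetric, so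
`f` is a cubic form and maximality on the sphere reads `f v ≤ λ ‖v‖³` for all `v`; `λ > 0`
because `f ≡ 0` would force `v² = 0` for all `v`, hence zero multiplication.
For `y ⊥ x` the vector `x + t y` has `‖x + t y‖ ≤ 1 + t² ‖y‖² / 2`, which gives the polynomial
inequality `λ + 3t⟨x², y⟩ + 3t²⟨xy, y⟩ + t³ f y ≤ λ (1 + t² ‖y‖² / 2)³` for all `t`.
Its first-order term forces `⟨x², y⟩ = 0`, i.e. `x² = λ x`, and its second-order term gives
`⟨xy, y⟩ ≤ (λ/2) ‖y‖²`; dividing by `λ` gives the claim for `c = x / λ`.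
-/

open Filter Topology

lemma nonpos_of_forall_pos_le_mul {a : ℝ} {g : ℝ → ℝ} (hg : ContinuousAt g 0)
    (h : ∀ t, 0 < t → a ≤ t * g t) : a ≤ 0 := by
  have hcont : ContinuousAt (fun t => t * g t) 0 := by fun_prop
  have hlim : Tendsto (fun t => t * g t) (𝓝[>] 0) (𝓝 0) := by
    simpa using hcont.tendsto.mono_left nhdsWithin_le_nhds
  exact ge_of_tendsto hlim (eventually_nhdsWithin_of_forall h)

section

variable {V : Type*} [AddCommGroup V] [Module ℝ V] {mul : V →ₗ[ℝ] V →ₗ[ℝ] V}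
  {B : V →ₗ[ℝ] V →ₗ[ℝ] ℝ}

lemma self_nonneg_of_pos (hpos : ∀ x, x ≠ 0 → 0 < B x x) (v : V) : 0 ≤ B v v := by
  rcases eq_or_ne v 0 with rfl | hv
  · simp
  · exact (hpos v hv).le

lemma eq_zero_of_self_eq_zero (hpos : ∀ x, x ≠ 0 → 0 < B x x) {v : V} (hv : B v v = 0) :
    v = 0 := by
  by_contra h
  exact (hpos v h).ne' hv

lemma cubic_add_smul (hcomm : ∀ x y, mul x y = mul y x) (hsymm : ∀ x y, B x y = B y x)
    (hassoc : ∀ x y z, B (mul x y) z = B x (mul y z)) (x y : V) (t : ℝ) :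
    B (x + t • y) (mul (x + t • y) (x + t • y)) =
      B x (mul x x) + 3 * t * B (mul x x) y + 3 * t ^ 2 * B (mul x y) y +
        t ^ 3 * B y (mul y y) := by
  simp only [map_add, map_smul, LinearMap.add_apply, LinearMap.smul_apply, smul_eq_mul]
  rw [← hassoc x x y, ← hassoc x y y, hcomm y x, ← hassoc x x y, hsymm y (mul x x),
    hsymm y (mul x y)]
  ring

lemma exists_cubic_ne_zero (hcomm : ∀ x y, mul x y = mul y x) (hsymm : ∀ x y, B x y = B y x)
    (hassoc : ∀ x y z, B (mul x y) z = B x (mul y z)) (hpos : ∀ x, x ≠ 0 → 0 < B x x)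
    (hmul : ¬ ∀ x y, mul x y = 0) : ∃ v, B v (mul v v) ≠ 0 := by
  by_contra! hf
  have hsq : ∀ u, mul u u = 0 := by
    intro u
    have hplus := cubic_add_smul hcomm hsymm hassoc u (mul u u) 1
    have hminus := cubic_add_smul hcomm hsymm hassoc u (mul u u) (-1)
    rw [hf, hf, hf] at hplus hminus
    exact eq_zero_of_self_eq_zero hpos (by linarith)
  refine hmul fun u v => ?_
  have h := hsq (u + v)
  simp only [map_add, LinearMap.add_apply, hsq, zero_add, add_zero, hcomm v u] at h
  rw [← two_smul ℝ] at h
  exact (smul_eq_zero.mp h).resolve_left two_ne_zero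

lemma cubic_le_mul_sqrt_pow_three (hpos : ∀ x, x ≠ 0 → 0 < B x x) {x : V}
    (hmax : ∀ y, B y y = 1 → B y (mul y y) ≤ B x (mul x x)) (v : V) :
    B v (mul v v) ≤ B x (mul x x) * Real.sqrt (B v v) ^ 3 := by
  rcases eq_or_ne v 0 with rfl | hv
  · simp
  set r := Real.sqrt (B v v)
  have hr : 0 < r := Real.sqrt_pos.2 (hpos v hv)
  have hr2 : r ^ 2 = B v v := Real.sq_sqrt (hpos v hv).le
  have hunit : B (r⁻¹ • v) (r⁻¹ • v) = 1 := by
    simp only [map_smul, LinearMap.smul_apply, smul_eq_mul, ← hr2]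
    field_simp
  have h := hmax _ hunit
  simp only [map_smul, LinearMap.smul_apply, smul_eq_mul] at h
  calc B v (mul v v) = r ^ 3 * (r⁻¹ * (r⁻¹ * (r⁻¹ * B v (mul v v)))) := by field_simp
    _ ≤ r ^ 3 * B x (mul x x) := by gcongr
    _ = _ := mul_comm _ _

lemma cubic_max_pos (hpos : ∀ x, x ≠ 0 → 0 < B x x) {x : V}
    (hmax : ∀ y, B y y = 1 → B y (mul y y) ≤ B x (mul x x)) (hf : ∃ v, B v (mul v v) ≠ 0) :
    0 < B x (mul x x) := by
  obtain ⟨v, hv⟩ := hf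
  obtain ⟨w, hw⟩ : ∃ w, 0 < B w (mul w w) := by
    rcases hv.lt_or_gt with h | h
    · exact ⟨-v, by simpa using h⟩
    · exact ⟨v, h⟩
  exact pos_of_mul_pos_left (hw.trans_le (cubic_le_mul_sqrt_pow_three hpos hmax w))
    (by positivity)

lemma cubic_le_mul_pow_three_of_le_sq (hpos : ∀ x, x ≠ 0 → 0 < B x x) {x : V}
    (hmax : ∀ y, B y y = 1 → B y (mul y y) ≤ B x (mul x x)) (hlam : 0 ≤ B x (mul x x))
    {v : V} {s : ℝ} (hs : 0 ≤ s) (hv : B v v ≤ s ^ 2) :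
    B v (mul v v) ≤ B x (mul x x) * s ^ 3 :=
  (cubic_le_mul_sqrt_pow_three hpos hmax v).trans <| mul_le_mul_of_nonneg_left
    (pow_le_pow_left₀ (Real.sqrt_nonneg _) (Real.sqrt_le_iff.mpr ⟨hs, hv⟩) 3) hlam

lemma cubic_add_smul_le (hcomm : ∀ x y, mul x y = mul y x) (hsymm : ∀ x y, B x y = B y x)
    (hassoc : ∀ x y z, B (mul x y) z = B x (mul y z)) (hpos : ∀ x, x ≠ 0 → 0 < B x x)
    {x : V} (hx : B x x = 1) (hmax : ∀ y, B y y = 1 → B y (mul y y) ≤ B x (mul x x))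
    (hlam : 0 ≤ B x (mul x x)) {y : V} (hy : B y x = 0) (t : ℝ) :
    B x (mul x x) + 3 * t * B (mul x x) y + 3 * t ^ 2 * B (mul x y) y + t ^ 3 * B y (mul y y) ≤
      B x (mul x x) * (1 + t ^ 2 * B y y / 2) ^ 3 := by
  have hm := self_nonneg_of_pos hpos y
  have hnorm : B (x + t • y) (x + t • y) = 1 + t ^ 2 * B y y := by
    simp only [map_add, map_smul, LinearMap.add_apply, LinearMap.smul_apply, smul_eq_mul, hx,
      hsymm x y, hy]
    ring
  rw [← cubic_add_smul hcomm hsymm hassoc]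
  refine cubic_le_mul_pow_three_of_le_sq hpos hmax hlam (by positivity) ?_
  rw [hnorm]
  nlinarith [sq_nonneg (t ^ 2 * B y y)]

lemma apply_sq_eq_zero_of_orthogonal (hcomm : ∀ x y, mul x y = mul y x)
    (hsymm : ∀ x y, B x y = B y x) (hassoc : ∀ x y z, B (mul x y) z = B x (mul y z))
    (hpos : ∀ x, x ≠ 0 → 0 < B x x) {x : V} (hx : B x x = 1)
    (hmax : ∀ y, B y y = 1 → B y (mul y y) ≤ B x (mul x x)) (hlam : 0 ≤ B x (mul x x))
    {y : V} (hy : B y x = 0) : B (mul x x) y = 0 := by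
  have hle : ∀ z, B z x = 0 → B (mul x x) z ≤ 0 := by
    intro z hz
    have hpert := cubic_add_smul_le hcomm hsymm hassoc hpos hx hmax hlam hz
    set lam := B x (mul x x)
    set m := B z z
    refine nonpos_of_forall_pos_le_mul (g := fun t => (lam * (3 / 2 * m + 3 / 4 * t ^ 2 * m ^ 2
      + 1 / 8 * t ^ 4 * m ^ 3) - 3 * B (mul x z) z - t * B z (mul z z)) / 3) (by fun_prop)
      fun t ht => le_of_mul_le_mul_left ?_ (by positivity : (0 : ℝ) < 3 * t)
    linear_combination hpert t
  have hneg := hle (-y) (by simp [hy])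
  rw [map_neg, neg_nonpos] at hneg
  exact (hle y hy).antisymm hneg

lemma mul_self_eq_smul_of_orthogonal (hsymm : ∀ x y, B x y = B y x)
    (hpos : ∀ x, x ≠ 0 → 0 < B x x) {x : V} (hx : B x x = 1)
    (horth : ∀ y, B y x = 0 → B (mul x x) y = 0) : mul x x = B x (mul x x) • x := by
  set w := mul x x - B x (mul x x) • x
  have hwx : B w x = 0 := by
    simp [w, hx, hsymm (mul x x) x]
  have hww : B w w = 0 := by
    calc B w w = B (mul x x) w - B x (mul x x) * B x w := by simp [w]
      _ = 0 := by rw [horth w hwx, hsymm x w, hwx, mul_zero, sub_zero]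
  exact sub_eq_zero.mp (eq_zero_of_self_eq_zero hpos hww)

lemma apply_mul_le_half_of_orthogonal (hcomm : ∀ x y, mul x y = mul y x)
    (hsymm : ∀ x y, B x y = B y x) (hassoc : ∀ x y z, B (mul x y) z = B x (mul y z))
    (hpos : ∀ x, x ≠ 0 → 0 < B x x) {x : V} (hx : B x x = 1)
    (hmax : ∀ y, B y y = 1 → B y (mul y y) ≤ B x (mul x x)) (hlam : 0 ≤ B x (mul x x))
    {y : V} (hy : B y x = 0) : B (mul x y) y ≤ B x (mul x x) / 2 * B y y := by
  have hpert := cubic_add_smul_le hcomm hsymm hassoc hpos hx hmax hlam hy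
  rw [apply_sq_eq_zero_of_orthogonal hcomm hsymm hassoc hpos hx hmax hlam hy] at hpert
  set lam := B x (mul x x)
  set m := B y y
  have key : 3 * B (mul x y) y - 3 / 2 * lam * m ≤ 0 := by
    refine nonpos_of_forall_pos_le_mul (g := fun t => lam * (3 / 4 * t * m ^ 2
      + 1 / 8 * t ^ 3 * m ^ 3) - B y (mul y y)) (by fun_prop)
      fun t ht => le_of_mul_le_mul_left ?_ (by positivity : (0 : ℝ) < t ^ 2)
    linear_combination hpert t
  linarith

end

theorem stmt_7_general {V : Type*} [AddCommGroup V] [Module ℝ V]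
    (mul : V →ₗ[ℝ] V →ₗ[ℝ] V) (hcomm : ∀ x y, mul x y = mul y x)
    (B : V →ₗ[ℝ] V →ₗ[ℝ] ℝ) (hsymm : ∀ x y, B x y = B y x)
    (hassoc : ∀ x y z, B (mul x y) z = B x (mul y z))
    (hpos : ∀ x, x ≠ 0 → 0 < B x x)
    (hmul : ¬ ∀ x y, mul x y = 0)
    (x : V) (hx : B x x = 1)
    (hmax : ∀ y, B y y = 1 → B y (mul y y) ≤ B x (mul x x))
    (c : V) (hc : c = (B (mul x x) x)⁻¹ • x) :
    mul c c = c ∧ c ≠ 0 ∧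
      ∀ y, B y c = 0 → B (mul c y) y ≤ (1 / 2 : ℝ) * B y y := by
  have hlam := cubic_max_pos hpos hmax (exists_cubic_ne_zero hcomm hsymm hassoc hpos hmul)
  have hsq := mul_self_eq_smul_of_orthogonal hsymm hpos hx fun y hy =>
    apply_sq_eq_zero_of_orthogonal hcomm hsymm hassoc hpos hx hmax hlam.le hy
  have hx0 : x ≠ 0 := by rintro rfl; simp at hx
  rw [hsymm] at hc
  subst hc
  set lam := B x (mul x x)
  refine ⟨?_, smul_ne_zero (inv_ne_zero hlam.ne') hx0, fun y hy => ?_⟩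
  · rw [map_smul, map_smul, LinearMap.smul_apply, hsq, smul_smul, smul_smul]
    congr 1
    field_simp
  · have hyx : B y x = 0 := by
      simpa [hlam.ne'] using hy
    have hle := apply_mul_le_half_of_orthogonal hcomm hsymm hassoc hpos hx hmax hlam.le hyx
    calc B (mul (lam⁻¹ • x) y) y = lam⁻¹ * B (mul x y) y := by simp
      _ ≤ lam⁻¹ * (lam / 2 * B y y) := by gcongr
      _ = 1 / 2 * B y y := by field_simp

/-- if `x` is a global maximum of `⟨x,x²⟩` on the unit sphere and
`c = x/⟨x²,x⟩`, then `⟨cy,y⟩ ≤ (1/2)⟨y,y⟩` for all `y ⊥ c`, i.e. `L_c ≤ 1/2` on `c⊥`. -/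
theorem stmt_7 {V : Type*} [AddCommGroup V] [Module ℝ V] [FiniteDimensional ℝ V]
    [Nontrivial V]
    (mul : V →ₗ[ℝ] V →ₗ[ℝ] V) (hcomm : ∀ x y, mul x y = mul y x)
    (B : V →ₗ[ℝ] V →ₗ[ℝ] ℝ) (hsymm : ∀ x y, B x y = B y x)
    (hassoc : ∀ x y z, B (mul x y) z = B x (mul y z))
    (hpos : ∀ x, x ≠ 0 → 0 < B x x)
    (hmul : ¬ ∀ x y, mul x y = 0)
    (x : V) (hx : B x x = 1)
    (hmax : ∀ y, B y y = 1 → B y (mul y y) ≤ B x (mul x x))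
    (c : V) (hc : c = (B (mul x x) x)⁻¹ • x) :
    mul c c = c ∧ c ≠ 0 ∧
      ∀ y, B y c = 0 → B (mul c y) y ≤ (1 / 2 : ℝ) * B y y :=
  stmt_7_general mul hcomm B hsymm hassoc hpos hmul x hx hmax c hc
end

section
/- Let V be a finite-dimensional commutative real algebra with positive definite associative symmetric bilinear form, and let c be an idempotent such that ⟨cy,y⟩ ≤ (1/2)⟨y,y⟩ for all y orthogonal to c. Then the eigenvalue 1 of L_c is simple: the eigenspace {y : cy = y} is one-dimensional (spanned by c). -/
/-!
If `c y = y`, split `y = t c + z` with `z ⊥ c`. Then `c z = z` as well, so the hypothesis gives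
`⟨z, z⟩ = ⟨c z, z⟩ ≤ ½ ⟨z, z⟩`, forcing `z = 0` by positive definiteness.
-/

section

variable {V : Type*} [AddCommGroup V] [Module ℝ V]

lemma LinearMap.apply_sub_smul_div_self_eq_zero (B : V →ₗ[ℝ] V →ₗ[ℝ] ℝ) {c : V}
    (hc : B c c ≠ 0) (y : V) : B (y - (B y c / B c c) • c) c = 0 := by
  simp only [map_sub, map_smul, LinearMap.sub_apply, LinearMap.smul_apply, smul_eq_mul]
  field_simp
  ring

lemma eq_zero_of_apply_self_le_half (B : V →ₗ[ℝ] V →ₗ[ℝ] ℝ)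
    (hpos : ∀ x, x ≠ 0 → 0 < B x x) {z : V} (hz : B z z ≤ (1 / 2 : ℝ) * B z z) : z = 0 := by
  by_contra hne
  linarith [hpos z hne]

end

theorem stmt_8_general {V : Type*} [AddCommGroup V] [Module ℝ V]
    (mul : V →ₗ[ℝ] V →ₗ[ℝ] V)
    (B : V →ₗ[ℝ] V →ₗ[ℝ] ℝ)
    (hpos : ∀ x, x ≠ 0 → 0 < B x x)
    (c : V) (hc : mul c c = c) (hc0 : c ≠ 0)
    (hext : ∀ y, B y c = 0 → B (mul c y) y ≤ (1 / 2 : ℝ) * B y y) :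
    {y : V | mul c y = y} = Set.range (fun t : ℝ => t • c) := by
  ext y
  constructor
  · intro (hy : mul c y = y)
    set t := B y c / B c c
    have hzc : B (y - t • c) c = 0 :=
      B.apply_sub_smul_div_self_eq_zero (hpos c hc0).ne' y
    have hcz : mul c (y - t • c) = y - t • c := by
      simp only [map_sub, map_smul, hy, hc]
    have hz : y - t • c = 0 := by
      refine eq_zero_of_apply_self_le_half B hpos ?_
      simpa only [hcz] using hext _ hzc
    exact ⟨t, (sub_eq_zero.mp hz).symm⟩
  · rintro ⟨t, rfl⟩
    simp only [Set.mem_ofPred_eq, map_smul, hc]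

/-- if `c` is a nonzero idempotent with `⟨cy,y⟩ ≤ (1/2)⟨y,y⟩` for all
`y ⊥ c`, then the eigenvalue 1 of `L_c` is simple: `{y : cy = y}` is spanned by `c`. -/
theorem stmt_8 {V : Type*} [AddCommGroup V] [Module ℝ V] [FiniteDimensional ℝ V]
    (mul : V →ₗ[ℝ] V →ₗ[ℝ] V) (hcomm : ∀ x y, mul x y = mul y x)
    (B : V →ₗ[ℝ] V →ₗ[ℝ] ℝ) (hsymm : ∀ x y, B x y = B y x)
    (hassoc : ∀ x y z, B (mul x y) z = B x (mul y z))
    (hpos : ∀ x, x ≠ 0 → 0 < B x x)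
    (c : V) (hc : mul c c = c) (hc0 : c ≠ 0)
    (hext : ∀ y, B y c = 0 → B (mul c y) y ≤ (1 / 2 : ℝ) * B y y) :
    {y : V | mul c y = y} = Set.range (fun t : ℝ => t • c) :=
  stmt_8_general mul B hpos c hc hc0 hext
end

section
/- Let V be a nonzero finite-dimensional commutative unital real algebra of dimension at least 2 possessing a positive definite associative symmetric bilinear form. Then there exists an idempotent c in V with c ≠ 0 and c ≠ e, where e is the unit. -/
/-!
Use `B` as an inner product and maximise the cubic form `F x = ⟪x x, x⟫` on the unit sphere, at
some `c`. Associativity of the form makes `⟪x y, z⟫` totally symmetric, so the gradient of `F` is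
`3 x x` and the Lagrange condition reads `c c = λ c` with `λ = F c`, which is positive because
`F e = ‖e‖² > 0`; thus `λ⁻¹ c` is a nonzero idempotent. If it were `e`, multiplication by `c`
would be `λ • id`, whereas the second-order condition at the maximum gives
`2 ⟪c v, v⟫ ≤ λ ‖v‖²` for `v ⊥ c`, and such `v ≠ 0` exist when `dim V ≥ 2`.
-/

open Module Metric Filter Topology
open scoped RealInnerProductSpace

lemma le_of_forall_ne_zero_le_add_mul_sq {a b c : ℝ} (h : ∀ t : ℝ, t ≠ 0 → a ≤ b + c * t ^ 2) :
    a ≤ b := by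
  have hlim : Tendsto (fun t : ℝ => b + c * t ^ 2) (𝓝 0) (𝓝 (b + c * 0 ^ 2)) :=
    Continuous.tendsto (by fun_prop) 0
  rw [zero_pow two_ne_zero, mul_zero, add_zero] at hlim
  exact ge_of_tendsto (hlim.mono_left nhdsWithin_le_nhds)
    (eventually_nhdsWithin_of_forall (s := {0}ᶜ) h)

lemma hasDerivAt_cubic_zero (a b c d : ℝ) :
    HasDerivAt (fun t : ℝ => a + b * t + c * t ^ 2 + d * t ^ 3) b 0 := by
  refine (((((hasDerivAt_id (0 : ℝ)).const_mul b).const_add a).add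
    ((hasDerivAt_pow 2 (0 : ℝ)).const_mul c)).add
    ((hasDerivAt_pow 3 (0 : ℝ)).const_mul d)).congr_deriv ?_
  simp

section CubicForm

variable {V : Type*} [NormedAddCommGroup V] [InnerProductSpace ℝ V]

lemma exists_ne_zero_inner_eq_zero [FiniteDimensional ℝ V] (hdim : 2 ≤ finrank ℝ V) (c : V) :
    ∃ v, v ≠ 0 ∧ ⟪c, v⟫ = 0 := by
  have hsum := (ℝ ∙ c).finrank_add_finrank_orthogonal
  have hc : finrank ℝ (ℝ ∙ c) ≤ 1 := by
    simpa using finrank_span_le_card ({c} : Set V)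
  obtain ⟨v, hv, hv0⟩ := Submodule.exists_mem_ne_zero_of_ne_bot (p := (ℝ ∙ c)ᗮ) fun hbot => by
    rw [hbot, finrank_bot] at hsum
    omega
  exact ⟨v, hv0, Submodule.mem_orthogonal_singleton_iff_inner_right.1 hv⟩

def cubicForm (mul : V →ₗ[ℝ] V →ₗ[ℝ] V) (x : V) : ℝ := ⟪mul x x, x⟫

variable {mul : V →ₗ[ℝ] V →ₗ[ℝ] V}

lemma cubicForm_smul (r : ℝ) (x : V) : cubicForm mul (r • x) = r ^ 3 * cubicForm mul x := by
  simp only [cubicForm, map_smul, LinearMap.smul_apply, real_inner_smul_left,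
    real_inner_smul_right]
  ring

lemma cubicForm_neg (x : V) : cubicForm mul (-x) = -cubicForm mul x := by
  rw [← neg_one_smul ℝ x, cubicForm_smul]
  ring

lemma continuous_cubicForm [FiniteDimensional ℝ V] : Continuous (cubicForm mul) :=
  (mul.toContinuousBilinearMap.continuous₂.comp₂ continuous_id continuous_id).inner continuous_id

lemma cubicForm_eq_norm_sq_of_forall_mul_eq {e : V} (he : ∀ x, mul e x = x) :
    cubicForm mul e = ‖e‖ ^ 2 := by
  rw [cubicForm, he, real_inner_self_eq_norm_sq]

lemma cubicForm_le_of_isMaxOn {c : V} (hmax : IsMaxOn (cubicForm mul) (sphere 0 1) c) (x : V) :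
    cubicForm mul x ≤ cubicForm mul c * ‖x‖ ^ 3 := by
  rcases eq_or_ne x 0 with rfl | hx
  · simp [cubicForm]
  have hx' : 0 < ‖x‖ := norm_pos_iff.2 hx
  have hle := hmax (show ‖x‖⁻¹ • x ∈ sphere (0 : V) 1 by simp [norm_smul, hx'.ne'])
  calc cubicForm mul x = ‖x‖ ^ 3 * cubicForm mul (‖x‖⁻¹ • x) := by
        rw [cubicForm_smul, ← mul_assoc, ← mul_pow, mul_inv_cancel₀ hx'.ne', one_pow, one_mul]
    _ ≤ ‖x‖ ^ 3 * cubicForm mul c := mul_le_mul_of_nonneg_left hle (by positivity)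
    _ = cubicForm mul c * ‖x‖ ^ 3 := mul_comm _ _

/-- By AM-GM, `2‖x‖³ ≤ ‖x‖² (1 + ‖x‖²)`: a majorant that is polynomial along lines and tight on
the sphere, so one-variable calculus applies to it. -/
lemma two_mul_cubicForm_le_of_isMaxOn {c : V} (hc : c ∈ sphere (0 : V) 1)
    (hmax : IsMaxOn (cubicForm mul) (sphere 0 1) c) (x : V) :
    2 * cubicForm mul x ≤ cubicForm mul c * (‖x‖ ^ 2 * (1 + ‖x‖ ^ 2)) := by
  have hnonneg : 0 ≤ cubicForm mul c := by
    have : cubicForm mul (-c) ≤ cubicForm mul c :=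
      hmax (show -c ∈ sphere (0 : V) 1 by simpa using hc)
    rw [cubicForm_neg] at this
    linarith
  nlinarith [cubicForm_le_of_isMaxOn hmax x,
    mul_nonneg hnonneg (mul_nonneg (sq_nonneg ‖x‖) (sq_nonneg (‖x‖ - 1)))]

section Metrised

variable (hcomm : ∀ x y, mul x y = mul y x) (hassoc : ∀ x y z, ⟪mul x y, z⟫ = ⟪x, mul y z⟫)
include hcomm hassoc

lemma inner_mul_right_comm (x y z : V) : ⟪mul x y, z⟫ = ⟪mul x z, y⟫ := by
  rw [hassoc, hcomm y z, ← hassoc]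

lemma cubicForm_add_smul (c v : V) (t : ℝ) :
    cubicForm mul (c + t • v) = cubicForm mul c + 3 * ⟪mul c c, v⟫ * t
      + 3 * ⟪mul c v, v⟫ * t ^ 2 + cubicForm mul v * t ^ 3 := by
  have h₁ : ⟪mul c v, c⟫ = ⟪mul c c, v⟫ := inner_mul_right_comm hcomm hassoc c v c
  have h₂ : ⟪mul v v, c⟫ = ⟪mul c v, v⟫ := by
    rw [inner_mul_right_comm hcomm hassoc, hcomm]
  simp only [cubicForm, map_add, map_smul, LinearMap.add_apply, LinearMap.smul_apply,
    inner_add_left, inner_add_right, real_inner_smul_left, real_inner_smul_right, hcomm v c,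
    h₁, h₂]
  ring

lemma mul_self_eq_smul_of_isMaxOn {c : V} (hc : c ∈ sphere (0 : V) 1)
    (hmax : IsMaxOn (cubicForm mul) (sphere 0 1) c) : mul c c = cubicForm mul c • c := by
  refine ext_inner_right ℝ fun v => ?_
  set m := cubicForm mul c
  have hnorm : ‖c‖ = 1 := by simpa using hc
  have hN : HasDerivAt (fun t : ℝ => ‖c + t • v‖ ^ 2) (2 * ⟪c, v⟫) 0 := by
    simpa using ((hasDerivAt_id (0 : ℝ)).smul_const v).const_add c |>.norm_sq
  have hF : HasDerivAt (fun t : ℝ => cubicForm mul (c + t • v)) (3 * ⟪mul c c, v⟫) 0 := by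
    simpa only [cubicForm_add_smul hcomm hassoc] using hasDerivAt_cubic_zero _ _ _ _
  have hG := ((hN.mul (hN.const_add 1)).const_mul m).sub (hF.const_mul 2)
  have hmin : IsLocalMin (fun t : ℝ => m * (‖c + t • v‖ ^ 2 * (1 + ‖c + t • v‖ ^ 2))
      - 2 * cubicForm mul (c + t • v)) 0 := Eventually.of_forall fun t => by
    simp only [zero_smul, add_zero, hnorm]
    linarith [two_mul_cubicForm_le_of_isMaxOn hc hmax (c + t • v)]
  have := hmin.hasDerivAt_eq_zero hG
  simp only [zero_smul, add_zero, hnorm] at this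
  rw [real_inner_smul_left]
  linarith

lemma two_mul_inner_mul_le_of_isMaxOn {c v : V} (hc : c ∈ sphere (0 : V) 1)
    (hmax : IsMaxOn (cubicForm mul) (sphere 0 1) c) (hv : ⟪c, v⟫ = 0) :
    2 * ⟪mul c v, v⟫ ≤ cubicForm mul c * ‖v‖ ^ 2 := by
  set m := cubicForm mul c
  have hnorm : ‖c‖ = 1 := by simpa using hc
  have hN (t : ℝ) : ‖c + t • v‖ ^ 2 = 1 + ‖v‖ ^ 2 * t ^ 2 := by
    rw [norm_add_sq_real, real_inner_smul_right, hv, hnorm, norm_smul, mul_pow, Real.norm_eq_abs,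
      sq_abs]
    ring
  -- the odd terms cancel between `t` and `-t`
  have hbound (t : ℝ) (ht : t ≠ 0) :
      6 * ⟪mul c v, v⟫ ≤ 3 * m * ‖v‖ ^ 2 + m * (‖v‖ ^ 2) ^ 2 * t ^ 2 := by
    have hplus := two_mul_cubicForm_le_of_isMaxOn hc hmax (c + t • v)
    have hminus := two_mul_cubicForm_le_of_isMaxOn hc hmax (c + (-t) • v)
    rw [hN, cubicForm_add_smul hcomm hassoc] at hplus hminus
    have : t ^ 2 * (6 * ⟪mul c v, v⟫)
        ≤ t ^ 2 * (3 * m * ‖v‖ ^ 2 + m * (‖v‖ ^ 2) ^ 2 * t ^ 2) := by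
      linear_combination (hplus + hminus) / 2
    exact le_of_mul_le_mul_left this (by positivity)
  linarith [le_of_forall_ne_zero_le_add_mul_sq hbound]

lemma ne_smul_of_isMaxOn [FiniteDimensional ℝ V] (hdim : 2 ≤ finrank ℝ V) {e c : V}
    (he : ∀ x, mul e x = x) (hc : c ∈ sphere (0 : V) 1)
    (hmax : IsMaxOn (cubicForm mul) (sphere 0 1) c) (hpos : 0 < cubicForm mul c) :
    c ≠ cubicForm mul c • e := by
  intro hce
  obtain ⟨v, hv0, hv⟩ := exists_ne_zero_inner_eq_zero hdim c
  have hcv : mul c v = cubicForm mul c • v := by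
    conv_lhs => rw [hce]
    rw [map_smul, LinearMap.smul_apply, he]
  have h := two_mul_inner_mul_le_of_isMaxOn hcomm hassoc hc hmax hv
  rw [hcv, real_inner_smul_left, real_inner_self_eq_norm_sq] at h
  nlinarith [pow_pos (norm_pos_iff.2 hv0) 2]

theorem exists_mul_self_eq_ne_zero_ne_unit [FiniteDimensional ℝ V] (hdim : 2 ≤ finrank ℝ V)
    {e : V} (he : ∀ x, mul e x = x) : ∃ c, mul c c = c ∧ c ≠ 0 ∧ c ≠ e := by
  have : Nontrivial V := finrank_pos_iff (R := ℝ) |>.1 (by omega)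
  have he0 : e ≠ 0 := by
    obtain ⟨x, hx⟩ := exists_ne (0 : V)
    rintro rfl
    exact hx (by simpa using (he x).symm)
  obtain ⟨c, hc, hmax⟩ := (isCompact_sphere (0 : V) 1).exists_isMaxOn
    (NormedSpace.sphere_nonempty.2 zero_le_one) continuous_cubicForm.continuousOn
  set m := cubicForm mul c
  have hm : 0 < m := calc
    0 < ‖e‖⁻¹ := by positivity
    _ = cubicForm mul (‖e‖⁻¹ • e) := by
      rw [cubicForm_smul, cubicForm_eq_norm_sq_of_forall_mul_eq he]
      field_simp
    _ ≤ m := hmax (by simp [norm_smul, he0])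
  have hcc : mul c c = m • c := mul_self_eq_smul_of_isMaxOn hcomm hassoc hc hmax
  refine ⟨m⁻¹ • c, ?_, smul_ne_zero (inv_ne_zero hm.ne') (ne_zero_of_mem_unit_sphere ⟨c, hc⟩), ?_⟩
  · simp only [map_smul, LinearMap.smul_apply, hcc, smul_smul]
    congr 1
    field_simp
  · intro hce
    refine ne_smul_of_isMaxOn hcomm hassoc hdim he hc hmax hm ?_
    rw [← hce, smul_smul, mul_inv_cancel₀ hm.ne', one_smul]

end Metrised

end CubicForm

abbrev innerProductCoreOfPosDef {V : Type*} [AddCommGroup V] [Module ℝ V]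
    (B : V →ₗ[ℝ] V →ₗ[ℝ] ℝ) (hsymm : ∀ x y, B x y = B y x) (hpos : ∀ x, x ≠ 0 → 0 < B x x) :
    InnerProductSpace.Core ℝ V where
  inner x y := B x y
  conj_inner_symm x y := hsymm y x
  re_inner_nonneg x := by
    rcases eq_or_ne x 0 with rfl | hx
    · simp
    · exact (hpos x hx).le
  add_left x y z := by simp
  smul_left x y r := by simp
  definite x hx := by
    by_contra h
    exact (hpos x h).ne' hx

/-- a commutative unital real algebra of dimension ≥ 2 with positive
definite associative symmetric bilinear form contains an idempotent distinct from 0 and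
from the unit. -/
theorem stmt_9 {V : Type*} [AddCommGroup V] [Module ℝ V] [FiniteDimensional ℝ V]
    (mul : V →ₗ[ℝ] V →ₗ[ℝ] V) (hcomm : ∀ x y, mul x y = mul y x)
    (B : V →ₗ[ℝ] V →ₗ[ℝ] ℝ) (hsymm : ∀ x y, B x y = B y x)
    (hassoc : ∀ x y z, B (mul x y) z = B x (mul y z))
    (hpos : ∀ x, x ≠ 0 → 0 < B x x)
    (e : V) (he : ∀ x, mul e x = x)
    (hdim : 2 ≤ Module.finrank ℝ V) :
    ∃ c, mul c c = c ∧ c ≠ 0 ∧ c ≠ e := by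
  let core := innerProductCoreOfPosDef B hsymm hpos
  let : NormedAddCommGroup V := core.toNormedAddCommGroup
  let : InnerProductSpace ℝ V := .ofCore core.toCore
  exact exists_mul_self_eq_ne_zero_ne_unit hcomm hassoc hdim he
end
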